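/- Let n = p^m for a prime p and m > 2. Then the second Zagreb index of the essential ideal graph E_{Z_n} of Z_n = Z/nZ equals C(m−1, 2)·(m − 2)^2, where C(m−1,2) is the binomial coefficient (m−1 choose 2). -/

import Mathlib

/-- An ideal `I` of a commutative ring `R` is essential if it is nonzero and has
nonzero intersection with every nonzero ideal of `R`. -/
def IsEssentialIdeal {R : Type*} [CommRing R] (I : Ideal R) : Prop :=
  I ≠ ⊥ ∧ ∀ J : Ideal R, J ≠ ⊥ → I ⊓ J ≠ ⊥

/-- The essential ideal graph of a commutative ring `R`: vertices are the nonzero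
proper ideals of `R`, and distinct vertices `I`, `J` are adjacent iff `I + J` is
an essential ideal of `R`. -/
def essentialIdealGraph (R : Type*) [CommRing R] :
    SimpleGraph {I : Ideal R // I ≠ ⊥ ∧ I ≠ ⊤} where
  Adj I J := I ≠ J ∧ IsEssentialIdeal (I.1 ⊔ J.1)
  symm := by
    constructor
    rintro I J ⟨hne, h⟩
    exact ⟨hne.symm, by rwa [sup_comm]⟩
  loopless := ⟨fun I h => h.1 rfl⟩

/-- The annihilating ideal graph of a commutative ring `R`: vertices are the nonzero
annihilating ideals of `R`, with distinct vertices `I`, `J` adjacent iff `I * J = 0`. -/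
def annihilatingIdealGraph (R : Type*) [CommRing R] :
    SimpleGraph {I : Ideal R // I ≠ ⊥ ∧ ∃ J : Ideal R, J ≠ ⊥ ∧ I * J = ⊥} where
  Adj I J := I ≠ J ∧ I.1 * J.1 = ⊥
  symm := by
    constructor
    rintro I J ⟨hne, h⟩
    exact ⟨hne.symm, by rwa [mul_comm]⟩
  loopless := ⟨fun I h => h.1 rfl⟩

/-- A set `W` of vertices of a graph `G` is a resolving set if any two distinct
vertices are distinguished by their distance to some element of `W`. -/
def IsResolvingSet {V : Type*} (G : SimpleGraph V) (W : Set V) : Prop :=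
  ∀ u v : V, u ≠ v → ∃ w ∈ W, G.dist u w ≠ G.dist v w

/-- The metric dimension of a graph: the least cardinality of a (finite) resolving set. -/
noncomputable def metricDim {V : Type*} (G : SimpleGraph V) : ℕ :=
  sInf {k : ℕ | ∃ W : Set V, W.Finite ∧ IsResolvingSet G W ∧ W.ncard = k}

/-- The degree of a vertex: the number of vertices adjacent to it. -/
noncomputable def gdeg {V : Type*} (G : SimpleGraph V) (v : V) : ℕ :=
  Nat.card {u : V // G.Adj v u}

/-- The first Zagreb index: the sum of the squares of the vertex degrees. -/
noncomputable def zagreb1 {V : Type*} (G : SimpleGraph V) : ℕ :=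
  ∑ᶠ v : V, (gdeg G v) ^ 2

/-- The second Zagreb index: the sum over edges `{u,v}` of `deg u * deg v`. -/
noncomputable def zagreb2 {V : Type*} (G : SimpleGraph V) : ℕ :=
  ∑ᶠ e ∈ G.edgeSet, Sym2.lift ⟨fun u v => gdeg G u * gdeg G v, fun u v => mul_comm _ _⟩ e

/-!
The ideals of `ℤ/p^m` are the `(p^k)`, `0 ≤ k ≤ m`; they form a chain, so every nonzero ideal
is essential and the essential ideal graph is the complete graph on the `m - 1` nonzero proper
ideals. In the complete graph on `N` vertices each of the `C(N, 2)` edges contributes `(N - 1)²`.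
-/

open Ideal

namespace ZMod

variable {n : ℕ}

theorem comap_span_natCast {d : ℕ} (hd : d ∣ n) :
    (span {(d : ZMod n)}).comap (Int.castRingHom (ZMod n)) = span {(d : ℤ)} := by
  have hmap : span {(d : ZMod n)} = (span {(d : ℤ)}).map (Int.castRingHom (ZMod n)) := by
    simp [map_span]
  rw [hmap, comap_map_of_surjective _ (ringHom_surjective (Int.castRingHom (ZMod n))),
    ← RingHom.ker_eq_comap_bot, ker_intCastRingHom, sup_eq_left, span_singleton_le_span_singleton]
  exact_mod_cast hd

theorem span_natCast_injOn : Set.InjOn (fun d : ℕ => span {(d : ZMod n)}) {d | d ∣ n} := by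
  intro d hd e he hde
  have hspan := congrArg (comap (Int.castRingHom (ZMod n))) hde
  simp only [comap_span_natCast hd, comap_span_natCast he] at hspan
  rw [span_singleton_eq_span_singleton, Int.associated_iff_natAbs] at hspan
  simpa using hspan

theorem exists_dvd_eq_span_natCast (I : Ideal (ZMod n)) :
    ∃ d, d ∣ n ∧ I = span {(d : ZMod n)} := by
  obtain ⟨a, ha⟩ := IsPrincipalIdealRing.principal (I.comap (Int.castRingHom (ZMod n)))
  have hn : (n : ℤ) ∈ I.comap (Int.castRingHom (ZMod n)) := by simp
  rw [ha, submodule_span_eq, mem_span_singleton] at hn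
  refine ⟨a.natAbs, Int.natAbs_dvd_natAbs.mpr hn, ?_⟩
  rw [← map_comap_of_surjective _ (ringHom_surjective (Int.castRingHom (ZMod n))) I, ha,
    submodule_span_eq, ← Int.span_natAbs, map_span]
  simp

variable {p m : ℕ}

theorem exists_le_eq_span_pow (hp : p.Prime) (I : Ideal (ZMod (p ^ m))) :
    ∃ k ≤ m, I = span {((p ^ k : ℕ) : ZMod (p ^ m))} := by
  obtain ⟨d, hd, rfl⟩ := exists_dvd_eq_span_natCast I
  obtain ⟨k, hk, rfl⟩ := (Nat.dvd_prime_pow hp).mp hd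
  exact ⟨k, hk, rfl⟩

theorem ideal_le_total (hp : p.Prime) (I J : Ideal (ZMod (p ^ m))) : I ≤ J ∨ J ≤ I := by
  obtain ⟨a, -, rfl⟩ := exists_le_eq_span_pow hp I
  obtain ⟨b, -, rfl⟩ := exists_le_eq_span_pow hp J
  simp only [span_singleton_le_span_singleton]
  rcases le_total a b with hab | hab
  · exact Or.inr (Nat.cast_dvd_cast (pow_dvd_pow p hab))
  · exact Or.inl (Nat.cast_dvd_cast (pow_dvd_pow p hab))

theorem card_ne_bot_ne_top_prime_pow (hp : p.Prime) :
    Nat.card {I : Ideal (ZMod (p ^ m)) // I ≠ ⊥ ∧ I ≠ ⊤} = m - 1 := by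
  have hinj : Set.InjOn (fun k : ℕ => span {((p ^ k : ℕ) : ZMod (p ^ m))}) (Set.Iic m) :=
    span_natCast_injOn.comp (Nat.pow_right_injective hp.two_le).injOn
      fun k hk => pow_dvd_pow p hk
  have hbot : span {((p ^ m : ℕ) : ZMod (p ^ m))} = ⊥ := by simp
  have htop : span {((p ^ 0 : ℕ) : ZMod (p ^ m))} = ⊤ := by simp
  have himage : {I : Ideal (ZMod (p ^ m)) | I ≠ ⊥ ∧ I ≠ ⊤} =
      (fun k : ℕ => span {((p ^ k : ℕ) : ZMod (p ^ m))}) '' Set.Ioo 0 m := by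
    ext I
    constructor
    · rintro ⟨hI0, hI1⟩
      obtain ⟨k, hk, rfl⟩ := exists_le_eq_span_pow hp I
      refine ⟨k, ⟨Nat.pos_of_ne_zero ?_, lt_of_le_of_ne hk ?_⟩, rfl⟩
      · rintro rfl; exact hI1 htop
      · rintro rfl; exact hI0 hbot
    · rintro ⟨k, ⟨hk0, hkm⟩, rfl⟩
      refine ⟨?_, ?_⟩
      · rw [← hbot]; exact fun h => hkm.ne (hinj hkm.le Set.self_mem_Iic h)
      · rw [← htop]; exact fun h => hk0.ne' (hinj hkm.le (Nat.zero_le m) h)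
  change Nat.card {I : Ideal (ZMod (p ^ m)) | I ≠ ⊥ ∧ I ≠ ⊤} = m - 1
  rw [Nat.card_coe_set_eq, himage,
    (hinj.mono (Set.Ioo_subset_Iio_self.trans Set.Iio_subset_Iic_self)).ncard_image,
    ← Finset.coe_Ioo, Set.ncard_coe_finset, Nat.card_Ioo, Nat.sub_zero]

end ZMod

section EssentialIdealGraph

variable {R : Type*} [CommRing R]

theorem isEssentialIdeal_of_le_total (htotal : ∀ I J : Ideal R, I ≤ J ∨ J ≤ I) {I : Ideal R}
    (hI : I ≠ ⊥) : IsEssentialIdeal I := by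
  refine ⟨hI, fun J hJ => ?_⟩
  rcases htotal I J with hIJ | hJI
  · rwa [inf_eq_left.mpr hIJ]
  · rwa [inf_eq_right.mpr hJI]

theorem essentialIdealGraph_eq_top_of_le_total (htotal : ∀ I J : Ideal R, I ≤ J ∨ J ≤ I) :
    essentialIdealGraph R = ⊤ := by
  ext I J
  refine ⟨fun h => h.1, fun hIJ => ⟨hIJ, isEssentialIdeal_of_le_total htotal ?_⟩⟩
  exact ne_bot_of_le_ne_bot I.2.1 le_sup_left

end EssentialIdealGraph

section Zagreb

variable {V : Type*}

theorem gdeg_eq_degree (G : SimpleGraph V) (v : V) [Fintype (G.neighborSet v)] :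
    gdeg G v = G.degree v := by
  rw [gdeg, ← G.card_neighborSet_eq_degree, ← Nat.card_eq_fintype_card]
  rfl

theorem zagreb2_eq_of_isRegularOfDegree [Fintype V] (G : SimpleGraph V) [DecidableRel G.Adj]
    {d : ℕ} (hG : G.IsRegularOfDegree d) : zagreb2 G = G.edgeFinset.card * d ^ 2 := by
  rw [zagreb2, ← SimpleGraph.coe_edgeFinset, finsum_mem_coe_finset, ← smul_eq_mul,
    ← Finset.sum_const]
  refine Finset.sum_congr rfl fun e _ => ?_
  induction e using Sym2.ind with
  | _ u v => simp [gdeg_eq_degree, hG.degree_eq, sq]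

theorem zagreb2_top [Finite V] :
    zagreb2 (⊤ : SimpleGraph V) = (Nat.card V).choose 2 * (Nat.card V - 1) ^ 2 := by
  classical
  have := Fintype.ofFinite V
  rw [zagreb2_eq_of_isRegularOfDegree _ SimpleGraph.IsRegularOfDegree.top,
    SimpleGraph.card_edgeFinset_top_eq_card_choose_two, Nat.card_eq_fintype_card]

end Zagreb

theorem stmt_16_general (p : ℕ) (hp : p.Prime) (m : ℕ)
    (n : ℕ) (hn : n = p ^ m) :
    zagreb2 (essentialIdealGraph (ZMod n)) = Nat.choose (m - 1) 2 * (m - 2) ^ 2 := by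
  subst hn
  have : NeZero (p ^ m) := ⟨pow_ne_zero m hp.ne_zero⟩
  rw [essentialIdealGraph_eq_top_of_le_total (ZMod.ideal_le_total hp), zagreb2_top,
    ZMod.card_ne_bot_ne_top_prime_pow hp, Nat.sub_sub]

/-- For `n = p^m` with `p` prime and `m > 2`, the second Zagreb index of
the essential ideal graph of `ℤ/nℤ` equals `C(m-1, 2) * (m-2)²`. -/
theorem stmt_16 (p : ℕ) (hp : p.Prime) (m : ℕ) (hm : 2 < m)
    (n : ℕ) (hn : n = p ^ m) :
    zagreb2 (essentialIdealGraph (ZMod n)) = Nat.choose (m - 1) 2 * (m - 2) ^ 2 :=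
  stmt_16_general p hp m n hn
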